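/- arXiv:2208.05412 — 2 statements merged into one kernel-verified Lean document; each statement's English description precedes it below -/
import Mathlib

section
/- (Lemma 2, prior 2D result restated in the paper.) Let d = 2, let m be a positive integer, and let i, j ∈ [2]. For any two arrays X ∈ Σ_q^{(m+δ₁(i)) × (m+δ₂(i))} and Y ∈ Σ_q^{(m+δ₁(j)) × (m+δ₂(j))}, where δ_ℓ(i) = 1 if ℓ = i and 0 otherwise, it holds that D_{e_i}(X) ∩ D_{e_j}(Y) ≠ ∅ if and only if I_{e_j}(X) ∩ I_{e_i}(Y) ≠ ∅. -/
/-- A `q`-ary `d`-dimensional array: a size vector `size : Fin d → ℕ` together with an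
entry of the alphabet `Fin q` for every index tuple inside the box
`[size 0] × ⋯ × [size (d-1)]`. -/
structure Arr (q d : ℕ) where
  size : Fin d → ℕ
  val : ∀ x : Fin d → ℕ, (∀ i, x i < size i) → Fin q

/-- The index map associated with inserting a hyperplane at position `k` along axis `i`:
coordinates below `k` stay put, the others are shifted up by one (so that position `k`
along axis `i` is the freshly inserted hyperplane). -/
def insIdx {d : ℕ} (i : Fin d) (k : ℕ) (x : Fin d → ℕ) : Fin d → ℕ :=
  fun j => if j = i then (if x i < k then x i else x i + 1) else x j

/-- `InsertsTo i A B`: the array `B` is obtained from the array `A` by a single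
`x_i`-insertion, i.e. by inserting one `(d-1)`-dimensional hyperplane (with arbitrary
entries) orthogonal to the `x_i`-axis. -/
def InsertsTo {q d : ℕ} (i : Fin d) (A B : Arr q d) : Prop :=
  (∀ j, B.size j = if j = i then A.size j + 1 else A.size j) ∧
  ∃ k ≤ A.size i, ∀ (x : Fin d → ℕ) (hx : ∀ j, x j < A.size j)
    (hx' : ∀ j, insIdx i k x j < B.size j),
    A.val x hx = B.val (insIdx i k x) hx'

/-- `DeletesTo i A B`: the array `B` is obtained from `A` by a single `x_i`-deletion,
the inverse operation of an `x_i`-insertion. -/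
def DeletesTo {q d : ℕ} (i : Fin d) (A B : Arr q d) : Prop :=
  InsertsTo i B A

/-- `Steps R t A B`: the array `B` is obtained from the array `A` by performing, for each
axis `i`, exactly `t i` operations of type `R i` (in some order). -/
inductive Steps {q d : ℕ} (R : Fin d → Arr q d → Arr q d → Prop) :
    (Fin d → ℕ) → Arr q d → Arr q d → Prop
  | refl (A : Arr q d) : Steps R 0 A A
  | step {t : Fin d → ℕ} {A B C : Arr q d} (i : Fin d) :
      R i A B → Steps R t B C → Steps R (t + Pi.single i 1) A C

/-- The deletion ball `D_t(X)`: all arrays obtainable from `X` by a `t`-deletion,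
i.e. by `t i` `x_i`-deletions for each axis `i`. -/
def delBall {q d : ℕ} (t : Fin d → ℕ) (X : Arr q d) : Set (Arr q d) :=
  {Y | Steps DeletesTo t X Y}

/-- The insertion ball `I_t(X)`: all arrays obtainable from `X` by a `t`-insertion,
i.e. by `t i` `x_i`-insertions for each axis `i`. -/
def insBall {q d : ℕ} (t : Fin d → ℕ) (X : Arr q d) : Set (Arr q d) :=
  {Y | Steps InsertsTo t X Y}

/-- The insertion-deletion ball `ID_t(X)`: all arrays obtainable from `X` by a
`t^del`-deletion followed by a `t^ins`-insertion, for some decomposition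
`t = t^ins + t^del`. -/
def insDelBall {q d : ℕ} (t : Fin d → ℕ) (X : Arr q d) : Set (Arr q d) :=
  {Z | ∃ tins tdel : Fin d → ℕ, tins + tdel = t ∧
    ∃ W ∈ delBall tdel X, Z ∈ insBall tins W}

/-- `Σ_q^{n^{⊗d}}`: the set of `q`-ary `d`-dimensional arrays of cubic size `n × ⋯ × n`. -/
def cube (q d n : ℕ) : Set (Arr q d) := {A | A.size = fun _ => n}

/-- A code `C` is a `t`-deletion-correcting code if the deletion balls `D_t(X)`, `X ∈ C`,
are pairwise disjoint. -/
def IsDelCode {q d : ℕ} (t : Fin d → ℕ) (C : Set (Arr q d)) : Prop :=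
  ∀ X ∈ C, ∀ Y ∈ C, X ≠ Y → delBall t X ∩ delBall t Y = ∅

/-- A code `C` is a `t`-insertion-correcting code if the insertion balls `I_t(X)`,
`X ∈ C`, are pairwise disjoint. -/
def IsInsCode {q d : ℕ} (t : Fin d → ℕ) (C : Set (Arr q d)) : Prop :=
  ∀ X ∈ C, ∀ Y ∈ C, X ≠ Y → insBall t X ∩ insBall t Y = ∅

/-- A code `C` is a `t`-insdel-correcting code if the insertion-deletion balls `ID_t(X)`,
`X ∈ C`, are pairwise disjoint. -/
def IsInsDelCode {q d : ℕ} (t : Fin d → ℕ) (C : Set (Arr q d)) : Prop :=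
  ∀ X ∈ C, ∀ Y ∈ C, X ≠ Y → insDelBall t X ∩ insDelBall t Y = ∅

/-! Read an array `A` as its partial entry map `A.get?`, which is `none` off the box. An
`x_i`-insertion at position `k` then says `A.get? = B.get? ∘ insIdx i k`, and both directions
reduce to commuting two index shifts, `insIdx i k ∘ insIdx j l = insIdx j l' ∘ insIdx i k`
(with `l' = l + 1` on a common axis when `k ≤ l`). If `X` and `Y` arise from a common `Z`, gluing
`X` and `Y` along `Z` gives a common insertion `W`; conversely, if `X` and `Y` have a common
insertion `W`, deleting from `X` the hyperplane along which `W` extends `Y` gives a common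
deletion `Z`. When `X = Y` on a common axis, any hyperplane of `X` will do. -/

section IndexShifts

variable {d : ℕ}

def remIdx (i : Fin d) (k : ℕ) (x : Fin d → ℕ) : Fin d → ℕ :=
  fun j => if j = i then (if x i < k then x i else x i - 1) else x j

lemma remIdx_insIdx (i : Fin d) (k : ℕ) (x : Fin d → ℕ) : remIdx i k (insIdx i k x) = x := by
  funext t
  by_cases ht : t = i <;> simp only [remIdx, insIdx, ht, if_true, if_false]; split_ifs <;> omega

lemma insIdx_remIdx {i : Fin d} {k : ℕ} {x : Fin d → ℕ} (h : x i ≠ k) :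
    insIdx i k (remIdx i k x) = x := by
  funext t
  by_cases ht : t = i <;> simp only [remIdx, insIdx, ht, if_true, if_false]; split_ifs <;> omega

lemma insIdx_apply_self_ne (i : Fin d) (k : ℕ) (x : Fin d → ℕ) : insIdx i k x i ≠ k := by
  simp only [insIdx, if_true]
  split_ifs <;> omega

lemma insIdx_insIdx_comm {i j : Fin d} (hij : i ≠ j) (k l : ℕ) (x : Fin d → ℕ) :
    insIdx i k (insIdx j l x) = insIdx j l (insIdx i k x) := by
  funext t
  by_cases hti : t = i <;> by_cases htj : t = j <;>
    simp only [insIdx, hti, htj, hij, hij.symm, if_true, if_false]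

lemma insIdx_insIdx_of_le {i : Fin d} {k l : ℕ} (hkl : k ≤ l) (x : Fin d → ℕ) :
    insIdx i k (insIdx i l x) = insIdx i (l + 1) (insIdx i k x) := by
  funext t
  by_cases ht : t = i <;> simp only [insIdx, ht, if_true, if_false]; split_ifs <;> omega

lemma insIdx_lt_iff {i : Fin d} {k : ℕ} {s s' : Fin d → ℕ}
    (hs : ∀ j, s' j = if j = i then s j + 1 else s j) (hk : k ≤ s i) (x : Fin d → ℕ) :
    (∀ j, insIdx i k x j < s' j) ↔ ∀ j, x j < s j := by
  refine forall_congr' fun j => ?_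
  rw [hs]
  by_cases hj : j = i
  · subst hj
    simp only [insIdx, if_true]
    split_ifs <;> omega
  · simp only [insIdx, hj, if_false]

end IndexShifts

namespace Arr

variable {q d : ℕ}

def get? (A : Arr q d) (x : Fin d → ℕ) : Option (Fin q) :=
  if h : ∀ j, x j < A.size j then some (A.val x h) else none

def ofFun [NeZero q] (s : Fin d → ℕ) (F : (Fin d → ℕ) → Option (Fin q)) : Arr q d :=
  ⟨s, fun x _ => (F x).getD 0⟩

lemma get?_ofFun_of_isSome_iff [NeZero q] {s : Fin d → ℕ} {F : (Fin d → ℕ) → Option (Fin q)}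
    (hF : ∀ x, (F x).isSome ↔ ∀ j, x j < s j) : (ofFun s F).get? = F := by
  funext x
  by_cases hx : ∀ j, x j < s j
  · obtain ⟨v, hv⟩ := Option.isSome_iff_exists.mp ((hF x).mpr hx)
    simp [get?, ofFun, hx, hv]
  · have hnone : F x = none := Option.not_isSome_iff_eq_none.mp (mt (hF x).mp hx)
    simp [get?, ofFun, hx, hnone]

end Arr

structure InsertsAt {q d : ℕ} (i : Fin d) (k : ℕ) (A B : Arr q d) : Prop where
  size_eq : ∀ j, B.size j = if j = i then A.size j + 1 else A.size j
  le_size : k ≤ A.size i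
  get?_eq : A.get? = B.get? ∘ insIdx i k

section Insertion

variable {q d : ℕ}

lemma insertsTo_iff_exists_insertsAt {i : Fin d} {A B : Arr q d} :
    InsertsTo i A B ↔ ∃ k, InsertsAt i k A B := by
  constructor
  · rintro ⟨hs, k, hk, hv⟩
    refine ⟨k, hs, hk, funext fun x => ?_⟩
    by_cases hx : ∀ j, x j < A.size j
    · have hx' := (insIdx_lt_iff hs hk x).mpr hx
      simp [Arr.get?, hx, hx', hv x hx hx']
    · have hx' := mt (insIdx_lt_iff hs hk x).mp hx
      simp [Arr.get?, hx, hx']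
  · rintro ⟨k, hs, hk, hv⟩
    refine ⟨hs, k, hk, fun x hx hx' => ?_⟩
    simpa [Arr.get?, hx, hx'] using congrFun hv x

lemma insertsAt_ofFun [NeZero q] {i : Fin d} {k : ℕ} {A : Arr q d} {s : Fin d → ℕ}
    {F : (Fin d → ℕ) → Option (Fin q)} (hs : ∀ j, s j = if j = i then A.size j + 1 else A.size j)
    (hk : k ≤ A.size i) (hF : A.get? = F ∘ insIdx i k) : InsertsAt i k A (Arr.ofFun s F) := by
  refine ⟨hs, hk, funext fun x => ?_⟩
  have hbox := insIdx_lt_iff hs hk x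
  have hFx := congrFun hF x
  by_cases hx : ∀ j, x j < A.size j
  · simp only [Arr.get?, hx, Function.comp_apply] at hFx ⊢
    simp [Arr.ofFun, hbox.mpr hx, ← hFx]
  · simp [Arr.get?, Arr.ofFun, hx, hbox]

lemma exists_insertsAt_of_lt [NeZero q] {i : Fin d} {k : ℕ} {B : Arr q d} (hk : k < B.size i) :
    ∃ A, InsertsAt i k A B := by
  set s : Fin d → ℕ := fun j => if j = i then B.size j - 1 else B.size j
  have hs : ∀ j, B.size j = if j = i then s j + 1 else s j := by
    intro j
    by_cases hj : j = i
    · subst hj; simp only [s, if_true]; omega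
    · simp only [s, hj, if_false]
  have hks : k ≤ s i := by simp only [s, if_true]; omega
  refine ⟨Arr.ofFun s (B.get? ∘ insIdx i k), hs, hks, ?_⟩
  refine Arr.get?_ofFun_of_isSome_iff fun x => ?_
  rw [← insIdx_lt_iff hs hks x]
  by_cases hx : ∀ j, insIdx i k x j < B.size j <;> simp [Arr.get?, hx]

lemma InsertsAt.exists_join [NeZero q] {i j : Fin d} {k l : ℕ} {Z X Y : Arr q d}
    (hX : InsertsAt i k Z X) (hY : InsertsAt j l Z Y) (hkl : i = j → k ≤ l) :
    ∃ W, InsertsTo j X W ∧ InsertsTo i Y W := by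
  set l' := if i = j then l + 1 else l
  have hcomm : ∀ z, insIdx i k (insIdx j l z) = insIdx j l' (insIdx i k z) := by
    intro z
    by_cases hij : i = j
    · subst hij; simp only [l', if_true]; exact insIdx_insIdx_of_le (hkl rfl) z
    · simp only [l', hij, if_false]; exact insIdx_insIdx_comm hij k l z
  have hshift : ∀ y : Fin d → ℕ, y j = l → insIdx i k y j = l' := by
    intro y hy
    by_cases hij : i = j
    · subst hij; have := hkl rfl; simp only [insIdx, l', if_true]; split_ifs <;> omega
    · simp [insIdx, l', hij, Ne.symm hij, hy]
  set F : (Fin d → ℕ) → Option (Fin q) := fun w =>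
    if w j = l' then Y.get? (remIdx i k w) else X.get? (remIdx j l' w)
  have hl' : l' ≤ X.size j := by
    have := hY.le_size; have := hX.size_eq j
    by_cases hij : i = j
    · subst hij; simp_all [l']
    · simp_all [l', Ne.symm hij]
  refine ⟨Arr.ofFun (fun t => if t = j then X.size t + 1 else X.size t) F,
    insertsTo_iff_exists_insertsAt.mpr ⟨l', insertsAt_ofFun (fun _ => rfl) hl' ?_⟩,
    insertsTo_iff_exists_insertsAt.mpr ⟨k, insertsAt_ofFun ?_ ?_ ?_⟩⟩
  · funext x
    simp [F, insIdx_apply_self_ne, remIdx_insIdx]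
  · intro t
    have hXt := hX.size_eq t; have hYt := hY.size_eq t
    by_cases hti : t = i <;> by_cases htj : t = j <;> simp_all
  · have hk := hX.le_size; have hYi := hY.size_eq i
    split_ifs at hYi <;> omega
  · funext y
    by_cases hy : y j = l
    · simp [F, hshift y hy, remIdx_insIdx]
    · obtain ⟨z, rfl⟩ : ∃ z, insIdx j l z = y := ⟨_, insIdx_remIdx hy⟩
      simp only [Function.comp_apply, F, hcomm, insIdx_apply_self_ne, if_false, remIdx_insIdx]
      exact (congrFun hY.get?_eq z).symm.trans (congrFun hX.get?_eq z)

lemma InsertsAt.exists_meet_of_comm [NeZero q] {i j : Fin d} {a b c b' : ℕ} {X Y W : Arr q d}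
    (hX : InsertsAt j b X W) (hY : InsertsAt i a Y W) (hc : c < X.size i)
    (hb' : b' + (if j = i then 1 else 0) ≤ X.size j)
    (hcomm : insIdx j b ∘ insIdx i c = insIdx i a ∘ insIdx j b') :
    ∃ Z, InsertsAt i c Z X ∧ InsertsAt j b' Z Y := by
  obtain ⟨Z, hZ⟩ := exists_insertsAt_of_lt hc
  refine ⟨Z, hZ, fun t => ?_, ?_, ?_⟩
  · have hZt := hZ.size_eq t; have hXt := hX.size_eq t; have hYt := hY.size_eq t
    split_ifs at hZt hXt hYt ⊢ <;> omega
  · have hZj := hZ.size_eq j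
    split_ifs at hZj hb' <;> omega
  · rw [hZ.get?_eq, hX.get?_eq, Function.comp_assoc, hcomm, ← Function.comp_assoc, ← hY.get?_eq]

lemma InsertsAt.exists_meet [NeZero q] {i j : Fin d} {a b : ℕ} {X Y W : Arr q d}
    (hX : InsertsAt j b X W) (hY : InsertsAt i a Y W) (hpos : 0 < X.size i) :
    ∃ Z, InsertsTo i Z X ∧ InsertsTo j Z Y := by
  suffices ∃ c b', ∃ Z, InsertsAt i c Z X ∧ InsertsAt j b' Z Y by
    obtain ⟨c, b', Z, hZX, hZY⟩ := this
    exact ⟨Z, insertsTo_iff_exists_insertsAt.mpr ⟨c, hZX⟩, insertsTo_iff_exists_insertsAt.mpr ⟨b', hZY⟩⟩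
  have hXi := hX.size_eq i
  have hYi : W.size i = Y.size i + 1 := by simpa using hY.size_eq i
  have ha := hY.le_size
  have hb := hX.le_size
  by_cases hij : i = j
  · subst hij
    simp only [if_true] at hXi
    rcases lt_trichotomy a b with hab | rfl | hab
    · obtain ⟨b, rfl⟩ : ∃ b', b = b' + 1 := ⟨b - 1, by omega⟩
      refine ⟨a, b, hX.exists_meet_of_comm hY (by omega) (by simpa using hb) ?_⟩
      exact (funext (insIdx_insIdx_of_le (Nat.le_of_lt_succ hab))).symm
    · exact ⟨0, 0, hX.exists_meet_of_comm hY hpos (by simp; omega) rfl⟩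
    · obtain ⟨a, rfl⟩ : ∃ a', a = a' + 1 := ⟨a - 1, by omega⟩
      refine ⟨a, b, hX.exists_meet_of_comm hY (by omega) (by simp; omega) ?_⟩
      exact funext (insIdx_insIdx_of_le (Nat.le_of_lt_succ hab))
  · refine ⟨a, b, hX.exists_meet_of_comm hY ?_ ?_ (funext (insIdx_insIdx_comm hij a b)).symm⟩
    · simp only [hij, if_false] at hXi; omega
    · simpa [Ne.symm hij] using hb

lemma InsertsTo.exists_join [NeZero q] {i j : Fin d} {Z X Y : Arr q d}
    (hX : InsertsTo i Z X) (hY : InsertsTo j Z Y) : ∃ W, InsertsTo j X W ∧ InsertsTo i Y W := by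
  obtain ⟨k, hX⟩ := insertsTo_iff_exists_insertsAt.mp hX
  obtain ⟨l, hY⟩ := insertsTo_iff_exists_insertsAt.mp hY
  by_cases hlk : i = j ∧ l < k
  · obtain ⟨rfl, hlk⟩ := hlk
    obtain ⟨W, hXW, hYW⟩ := hY.exists_join hX fun _ => hlk.le
    exact ⟨W, hYW, hXW⟩
  · exact hX.exists_join hY fun hij => not_lt.mp fun h => hlk ⟨hij, h⟩

lemma InsertsTo.exists_meet [NeZero q] {i j : Fin d} {X Y W : Arr q d}
    (hX : InsertsTo j X W) (hY : InsertsTo i Y W) (hpos : 0 < X.size i) :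
    ∃ Z, InsertsTo i Z X ∧ InsertsTo j Z Y := by
  obtain ⟨b, hX⟩ := insertsTo_iff_exists_insertsAt.mp hX
  obtain ⟨a, hY⟩ := insertsTo_iff_exists_insertsAt.mp hY
  exact hX.exists_meet hY hpos

end Insertion

lemma Steps.eq_of_zero {q d : ℕ} {R : Fin d → Arr q d → Arr q d → Prop} {t : Fin d → ℕ}
    {A B : Arr q d} (h : Steps R t A B) (ht : t = 0) : A = B := by
  cases h with
  | refl => rfl
  | step i _ _ => simpa using congrFun ht i

lemma Steps.single_iff {q d : ℕ} {R : Fin d → Arr q d → Arr q d → Prop} {i : Fin d}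
    {A B : Arr q d} : Steps R (Pi.single i 1) A B ↔ R i A B := by
  constructor
  · intro h
    generalize ht : (Pi.single i 1 : Fin d → ℕ) = t at h
    cases h with
    | refl => simpa using congrFun ht i
    | step i' hR hs =>
      obtain rfl : i' = i := by
        by_contra hne
        simpa [Pi.single_eq_of_ne hne] using congrFun ht i'
      rwa [Steps.eq_of_zero hs (add_eq_right.mp ht.symm)] at hR
  · intro h
    simpa using Steps.step i h (Steps.refl B)

theorem statement1_general (q m : ℕ) (hq : 2 ≤ q) (i j : Fin 2)
    (X Y : Arr q 2)
    (hX : X.size = fun ℓ => m + if ℓ = i then 1 else 0) :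
    (delBall (Pi.single i 1) X ∩ delBall (Pi.single j 1) Y).Nonempty ↔
    (insBall (Pi.single j 1) X ∩ insBall (Pi.single i 1) Y).Nonempty := by
  have : NeZero q := ⟨by omega⟩
  simp only [Set.Nonempty, Set.mem_inter_iff, delBall, insBall, Steps.single_iff, DeletesTo]
  constructor
  · rintro ⟨Z, hZX, hZY⟩
    exact hZX.exists_join hZY
  · rintro ⟨W, hXW, hYW⟩
    exact hXW.exists_meet hYW (by simp [hX])

/-- **Lemma 2** (prior 2D result). For a positive integer `m` and `i, j ∈ [2]`, and any
arrays `X ∈ Σ_q^{(m+δ₁(i)) × (m+δ₂(i))}` and `Y ∈ Σ_q^{(m+δ₁(j)) × (m+δ₂(j))}`,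
`D_{e_i}(X) ∩ D_{e_j}(Y) ≠ ∅ ↔ I_{e_j}(X) ∩ I_{e_i}(Y) ≠ ∅`. -/
theorem statement1 (q m : ℕ) (hq : 2 ≤ q) (hm : 0 < m) (i j : Fin 2)
    (X Y : Arr q 2)
    (hX : X.size = fun ℓ => m + if ℓ = i then 1 else 0)
    (hY : Y.size = fun ℓ => m + if ℓ = j then 1 else 0) :
    (delBall (Pi.single i 1) X ∩ delBall (Pi.single j 1) Y).Nonempty ↔
    (insBall (Pi.single j 1) X ∩ insBall (Pi.single i 1) Y).Nonempty :=
  statement1_general q m hq i j X Y hX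
end

section
/- (Claim 1, deletion case.) Let r₁, r₂ be vectors of nonnegative integers of length d and let κ ∈ [d] be such that r_{1,κ} = r_{2,κ} = 0. For any two arrays X of size (n+r_{1,1}) × ⋯ × (n+r_{1,d}) and Y of size (n+r_{2,1}) × ⋯ × (n+r_{2,d}) over Σ_q, it holds that D_{r₁}(X) ∩ D_{r₂}(Y) ≠ ∅ if and only if D_{P_κ(r₁)}(P_κ(X)) ∩ D_{P_κ(r₂)}(P_κ(Y)) ≠ ∅, where P_κ(r_j) denotes the vector of length d−1 obtained from r_j by deleting its (zero) κ-th entry, and the balls on the right-hand side consist of (d−1)-dimensional arrays over the alphabet Σ_{q^n}. -/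
/-- The projection `P_κ` of a `(d+1)`-dimensional array `X` whose axis `x_κ` has length
`n`: it groups, for each fixed choice of the other coordinates, the `n` entries of `X`
along the `x_κ`-axis into a single symbol of `Σ_{q^n}`, preserving the order of the
remaining axes. -/
noncomputable def proj {q d : ℕ} (n : ℕ) (κ : Fin (d + 1)) (X : Arr q (d + 1))
    (hκ : X.size κ = n) : Arr (q ^ n) d where
  size := fun j => X.size (κ.succAbove j)
  val := fun y hy => finFunctionFinEquiv (fun a : Fin n =>
    X.val (κ.insertNth (a : ℕ) y) (by
      intro i
      rcases eq_or_ne i κ with h | h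
      · subst h
        simp [Fin.insertNth_apply_same, hκ, a.isLt]
      · obtain ⟨j, rfl⟩ := Fin.exists_succAbove_eq h
        simpa [Fin.insertNth_apply_succAbove] using hy j))

/-!
Deletions along an axis other than `κ` remove the same hyperplane from every `x_κ`-column,
so they are exactly the deletions of the projected array, whose symbols over `Σ_{q^n}` are
these columns. Since `r₁ κ = r₂ κ = 0`, every array in either ball still has `x_κ`-length
`n`, and on such arrays the projection is a bijection, with inverse the expansion, commuting
with deletions off the axis `κ`. So a common element of the two balls projects to a common
element of the projected balls, and a common element of the projected balls expands to one
of the original balls.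
-/

namespace Arr

variable {q d : ℕ}

lemma ext {A B : Arr q d} (hs : A.size = B.size)
    (hv : ∀ x hx hx', A.val x hx = B.val x hx') : A = B := by
  cases A
  cases B
  cases hs
  simp only [Arr.mk.injEq, heq_eq_eq, true_and]
  funext x hx
  exact hv x hx hx

lemma val_congr (A : Arr q d) {x y : Fin d → ℕ} (h : x = y)
    (hx : ∀ i, x i < A.size i) (hy : ∀ i, y i < A.size i) :
    A.val x hx = A.val y hy := by
  subst h
  rfl

end Arr

section Projection

variable {q d n : ℕ}

lemma insIdx_succAbove_insertNth (κ : Fin (d + 1)) (j : Fin d) (k a : ℕ) (y : Fin d → ℕ) :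
    insIdx (κ.succAbove j) k (κ.insertNth a y) = κ.insertNth a (insIdx j k y) := by
  funext i
  refine Fin.succAboveCases κ ?_ (fun j' => ?_) i
  · simp [insIdx, (Fin.succAbove_ne κ j).symm]
  · by_cases h : j' = j <;>
      simp [insIdx, Fin.insertNth_apply_succAbove, h]

lemma insIdx_succAbove_eq_insertNth (κ : Fin (d + 1)) (j : Fin d) (k : ℕ)
    (x : Fin (d + 1) → ℕ) :
    insIdx (κ.succAbove j) k x = κ.insertNth (x κ) (insIdx j k (κ.removeNth x)) := by
  conv_lhs => rw [← Fin.insertNth_self_removeNth κ x]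
  exact insIdx_succAbove_insertNth κ j k _ _

lemma insertNth_lt_size (κ : Fin (d + 1)) {Z : Arr q (d + 1)} (hZ : Z.size κ = n)
    {y : Fin d → ℕ} (hy : ∀ j, y j < Z.size (κ.succAbove j)) (a : Fin n) :
    ∀ i, (κ.insertNth (a : ℕ) y : Fin (d + 1) → ℕ) i < Z.size i := by
  intro i
  refine Fin.succAboveCases κ ?_ (fun j => ?_) i
  · simp [hZ]
  · simpa using hy j

lemma finFunctionFinEquiv_symm_proj_val (κ : Fin (d + 1)) {Z : Arr q (d + 1)}
    (hZ : Z.size κ = n) (y : Fin d → ℕ) (hy : ∀ j, y j < (proj n κ Z hZ).size j) (a : Fin n)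
    (h : ∀ i, (κ.insertNth (a : ℕ) y : Fin (d + 1) → ℕ) i < Z.size i) :
    finFunctionFinEquiv.symm ((proj n κ Z hZ).val y hy) a
      = Z.val (κ.insertNth (a : ℕ) y) h := by
  simp only [proj, Equiv.symm_apply_apply]

/-- The expansion `P_κ⁻¹`, unpacking every symbol of `Σ_{q^n}` into an `x_κ`-column. -/
noncomputable def expand (n : ℕ) (κ : Fin (d + 1)) (W : Arr (q ^ n) d) : Arr q (d + 1) where
  size := κ.insertNth n W.size
  val := fun x hx =>
    finFunctionFinEquiv.symm (W.val (κ.removeNth x)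
        (fun j => by simpa [Fin.removeNth] using hx (κ.succAbove j)))
      ⟨x κ, by simpa using hx κ⟩

@[simp]
lemma expand_size_self (κ : Fin (d + 1)) (W : Arr (q ^ n) d) : (expand n κ W).size κ = n := by
  simp [expand]

@[simp]
lemma expand_size_succAbove (κ : Fin (d + 1)) (W : Arr (q ^ n) d) (j : Fin d) :
    (expand n κ W).size (κ.succAbove j) = W.size j := by
  simp [expand]

lemma proj_expand (κ : Fin (d + 1)) (W : Arr (q ^ n) d) (h : (expand n κ W).size κ = n) :
    proj n κ (expand n κ W) h = W := by
  refine Arr.ext (funext fun j => expand_size_succAbove κ W j) fun y hy hy' => ?_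
  refine finFunctionFinEquiv.symm.injective (funext fun a => ?_)
  rw [finFunctionFinEquiv_symm_proj_val κ h y hy a (insertNth_lt_size κ h hy a)]
  simp only [expand, Fin.removeNth_insertNth, Fin.insertNth_apply_same, Fin.eta]

lemma expand_proj (κ : Fin (d + 1)) (Z : Arr q (d + 1)) (hZ : Z.size κ = n) :
    expand n κ (proj n κ Z hZ) = Z := by
  have hsize : (expand n κ (proj n κ Z hZ)).size = Z.size := by
    rw [← Fin.insertNth_self_removeNth κ Z.size, hZ]
    rfl
  refine Arr.ext hsize fun x hx hx' => ?_
  have hxκ : x κ < n := hZ ▸ hx' κ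
  have hx'' := Fin.insertNth_self_removeNth κ x
  calc (expand n κ (proj n κ Z hZ)).val x hx
      = finFunctionFinEquiv.symm ((proj n κ Z hZ).val (κ.removeNth x) fun j => hx' _)
          ⟨x κ, hxκ⟩ := rfl
    _ = Z.val (κ.insertNth (x κ) (κ.removeNth x)) (hx''.symm ▸ hx') :=
      finFunctionFinEquiv_symm_proj_val κ hZ _ _ ⟨x κ, hxκ⟩ _
    _ = Z.val x hx' := Z.val_congr hx'' _ _

lemma InsertsTo.map_proj {κ : Fin (d + 1)} {j : Fin d} {A B : Arr q (d + 1)}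
    (h : InsertsTo (κ.succAbove j) A B) (hA : A.size κ = n) (hB : B.size κ = n) :
    InsertsTo j (proj n κ A hA) (proj n κ B hB) := by
  obtain ⟨hsize, k, hk, hval⟩ := h
  refine ⟨fun j' => ?_, k, hk, fun y hy hy' => ?_⟩
  · change B.size (κ.succAbove j') = _
    rw [hsize (κ.succAbove j')]
    simp [proj]
  · refine finFunctionFinEquiv.symm.injective (funext fun a => ?_)
    have hyA := insertNth_lt_size κ hA hy a
    have hyB := insertNth_lt_size κ hB hy' a
    rw [finFunctionFinEquiv_symm_proj_val κ hA y hy a hyA,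
      finFunctionFinEquiv_symm_proj_val κ hB _ hy' a hyB,
      hval _ hyA (by rw [insIdx_succAbove_insertNth]; exact hyB)]
    exact B.val_congr (insIdx_succAbove_insertNth κ j k a y) _ _

lemma InsertsTo.map_expand {κ : Fin (d + 1)} {j : Fin d} {A B : Arr (q ^ n) d}
    (h : InsertsTo j A B) : InsertsTo (κ.succAbove j) (expand n κ A) (expand n κ B) := by
  obtain ⟨hsize, k, hk, hval⟩ := h
  refine ⟨fun i => ?_, k, by simpa using hk, fun x hx hx' => ?_⟩
  · refine Fin.succAboveCases κ ?_ (fun j' => ?_) i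
    · simp [(Fin.succAbove_ne κ j).symm]
    · simp [hsize j']
  · have hx'' := insIdx_succAbove_eq_insertNth κ j k x
    simp only [expand, hx'', Fin.removeNth_insertNth, Fin.insertNth_apply_same]
    rw [hval]

lemma Steps.size_add {t : Fin d → ℕ} {A Z : Arr q d} (h : Steps DeletesTo t A Z) (i : Fin d) :
    Z.size i + t i = A.size i := by
  induction h with
  | refl A => simp
  | @step t A B C i' hAB _ ih =>
    rw [hAB.1 i, ← ih]
    by_cases hi : i = i' <;> simp [hi]
    omega

lemma Steps.map_proj {κ : Fin (d + 1)} {t : Fin (d + 1) → ℕ} {A Z : Arr q (d + 1)}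
    (h : Steps DeletesTo t A Z) (ht : t κ = 0) (hA : A.size κ = n) (hZ : Z.size κ = n) :
    Steps DeletesTo (κ.removeNth t) (proj n κ A hA) (proj n κ Z hZ) := by
  induction h with
  | refl A => exact Steps.refl _
  | @step t A B C i hAB _ ih =>
    have hiκ : i ≠ κ := by
      rintro rfl
      simp at ht
    obtain ⟨j, rfl⟩ := Fin.exists_succAbove_eq hiκ
    have hB : B.size κ = n := by
      rw [← hA, hAB.1 κ, if_neg (Fin.ne_succAbove κ j)]
    have hsplit :
        κ.removeNth (t + Pi.single (κ.succAbove j) 1) = κ.removeNth t + Pi.single j 1 := by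
      funext j'
      simp [Fin.removeNth, Pi.single_apply]
    rw [hsplit]
    exact Steps.step j (hAB.map_proj hB hA) (ih (by simpa using ht) hB hZ)

lemma Steps.map_expand {κ : Fin (d + 1)} {s : Fin d → ℕ} {A W : Arr (q ^ n) d}
    (h : Steps DeletesTo s A W) :
    Steps DeletesTo (κ.insertNth 0 s) (expand n κ A) (expand n κ W) := by
  induction h with
  | refl A =>
    rw [Fin.insertNth_zero_right, Pi.single_zero]
    exact Steps.refl _
  | @step s A B C j hAB _ ih =>
    have hsplit : (κ.insertNth 0 (s + Pi.single j 1) : Fin (d + 1) → ℕ)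
        = κ.insertNth 0 s + Pi.single (κ.succAbove j) 1 := by
      funext i
      refine Fin.succAboveCases κ ?_ (fun j' => ?_) i
      · simp [(Fin.succAbove_ne κ j).symm]
      · simp [Pi.single_apply]
    rw [hsplit]
    exact Steps.step _ hAB.map_expand ih

lemma Steps.expand_of_proj {κ : Fin (d + 1)} {t : Fin (d + 1) → ℕ} {A : Arr q (d + 1)}
    {W : Arr (q ^ n) d} (hA : A.size κ = n) (ht : t κ = 0)
    (h : Steps DeletesTo (κ.removeNth t) (proj n κ A hA) W) :
    Steps DeletesTo t A (expand n κ W) := by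
  have h' := h.map_expand (κ := κ)
  rwa [expand_proj, ← ht, Fin.insertNth_self_removeNth] at h'

end Projection

theorem statement4_general (q n d : ℕ) (κ : Fin (d + 1))
    (r₁ r₂ : Fin (d + 1) → ℕ) (h1 : r₁ κ = 0) (h2 : r₂ κ = 0)
    (X Y : Arr q (d + 1))
    (hXκ : X.size κ = n) (hYκ : Y.size κ = n) :
    (delBall r₁ X ∩ delBall r₂ Y).Nonempty ↔
    (delBall (fun j => r₁ (κ.succAbove j)) (proj n κ X hXκ) ∩
      delBall (fun j => r₂ (κ.succAbove j)) (proj n κ Y hYκ)).Nonempty := by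
  constructor
  · rintro ⟨Z, hXZ, hYZ⟩
    have hZ : Z.size κ = n := by simpa [h1, hXκ] using hXZ.size_add κ
    exact ⟨proj n κ Z hZ, hXZ.map_proj h1 hXκ hZ, hYZ.map_proj h2 hYκ hZ⟩
  · rintro ⟨W, hXW, hYW⟩
    exact ⟨expand n κ W, Steps.expand_of_proj hXκ h1 hXW, Steps.expand_of_proj hYκ h2 hYW⟩

/-- **Claim 1** (deletion case). Let `r₁, r₂` be nonnegative integer vectors with
`r₁ κ = r₂ κ = 0`. For arrays `X` of size `(n+r₁ 1) × ⋯ × (n+r₁ d)` and `Y` of size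
`(n+r₂ 1) × ⋯ × (n+r₂ d)`, `D_{r₁}(X) ∩ D_{r₂}(Y) ≠ ∅` iff
`D_{P_κ(r₁)}(P_κ(X)) ∩ D_{P_κ(r₂)}(P_κ(Y)) ≠ ∅`, where the right-hand balls consist of
`d`-dimensional arrays over `Σ_{q^n}` and `P_κ(r)` drops the (zero) `κ`-th entry of `r`. -/
theorem statement4 (q n d : ℕ) (hq : 2 ≤ q) (κ : Fin (d + 1))
    (r₁ r₂ : Fin (d + 1) → ℕ) (h1 : r₁ κ = 0) (h2 : r₂ κ = 0)
    (X Y : Arr q (d + 1))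
    (hX : X.size = fun i => n + r₁ i) (hY : Y.size = fun i => n + r₂ i)
    (hXκ : X.size κ = n) (hYκ : Y.size κ = n) :
    (delBall r₁ X ∩ delBall r₂ Y).Nonempty ↔
    (delBall (fun j => r₁ (κ.succAbove j)) (proj n κ X hXκ) ∩
      delBall (fun j => r₂ (κ.succAbove j)) (proj n κ Y hYκ)).Nonempty :=
  statement4_general q n d κ r₁ r₂ h1 h2 X Y hXκ hYκ
end
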